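/- arXiv:2009.04574 — 4 statements merged into one kernel-verified Lean document; each statement's English description precedes it below -/
import Mathlib

section
/- The one-dimensional fault boundary value problem has a unique solution: if v ∈ ℝ is a constant and q : [0, L] → ℝ is differentiable on [0, xg) and (xg, L] with q′(x) = −v there, q(0) = p0, q(L) = pL, the one-sided limits q(xg⁻) and q(xg⁺) exist, and v = t_f·(q(xg⁻) − q(xg⁺)), then v = u := (p0 − pL)/(t_f⁻¹ + L), q(x) = p0 − u·x for all x ∈ [0, xg), and q(x) = pL + u·(L − x) for all x ∈ (xg, L]. -/
/-!
On each side of the fault `q` is affine with slope `-v`, so its one-sided limits at `xg` are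
`p0 - v * xg` and `pL + v * (L - xg)`. The coupling condition then becomes the linear equation
`v = tf * (p0 - pL - v * L)`, whose only solution is `u`.
-/

open Set Filter Topology

theorem Convex.eq_add_smul_of_hasDerivWithinAt {E : Type*} [NormedAddCommGroup E]
    [NormedSpace ℝ E] {s : Set ℝ} (hs : Convex ℝ s) {f : ℝ → E} {c : E}
    (hf : ∀ x ∈ s, HasDerivWithinAt f c s x) {x y : ℝ} (hx : x ∈ s) (hy : y ∈ s) :
    f y = f x + (y - x) • c := by
  have h := hs.norm_image_sub_le_of_norm_hasFDerivWithin_le'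
    (φ := ContinuousLinearMap.toSpanSingleton ℝ c) (C := 0) hf (by simp) hx hy
  rw [zero_mul, norm_le_zero_iff, sub_eq_zero, sub_eq_iff_eq_add'] at h
  simpa using h

theorem eq_of_tendsto_nhdsLT_of_eqOn_Ioo {E : Type*} [TopologicalSpace E] [T2Space E]
    {f g : ℝ → E} {a b : ℝ} {l : E} (hab : a < b) (hfg : EqOn f g (Ioo a b))
    (hg : ContinuousAt g b) (hf : Tendsto f (𝓝[<] b) (𝓝 l)) : l = g b :=
  tendsto_nhds_unique hf <|
    (hg.tendsto.mono_left nhdsWithin_le_nhds).congr'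
      (eventuallyEq_of_mem (Ioo_mem_nhdsLT hab) hfg).symm

theorem eq_of_tendsto_nhdsGT_of_eqOn_Ioo {E : Type*} [TopologicalSpace E] [T2Space E]
    {f g : ℝ → E} {a b : ℝ} {l : E} (hab : a < b) (hfg : EqOn f g (Ioo a b))
    (hg : ContinuousAt g a) (hf : Tendsto f (𝓝[>] a) (𝓝 l)) : l = g a :=
  tendsto_nhds_unique hf <|
    (hg.tendsto.mono_left nhdsWithin_le_nhds).congr'
      (eventuallyEq_of_mem (Ioo_mem_nhdsGT hab) hfg).symm

theorem stmt_1_general (L xg tf p0 pL : ℝ) (hxg0 : 0 < xg) (hxgL : xg < L)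
    (htf : 0 < tf) (u : ℝ) (hu : u = (p0 - pL) / (tf⁻¹ + L))
    (v : ℝ) (q : ℝ → ℝ)
    (hq1 : ∀ x ∈ Ico (0 : ℝ) xg, HasDerivWithinAt q (-v) (Ico (0 : ℝ) xg) x)
    (hq2 : ∀ x ∈ Ioc xg L, HasDerivWithinAt q (-v) (Ioc xg L) x)
    (hq0 : q 0 = p0) (hqL : q L = pL)
    (qm qp : ℝ)
    (hqm : Tendsto q (𝓝[<] xg) (𝓝 qm))
    (hqp : Tendsto q (𝓝[>] xg) (𝓝 qp))
    (hcoup : v = tf * (qm - qp)) :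
    v = u ∧
    (∀ x ∈ Ico (0 : ℝ) xg, q x = p0 - u * x) ∧
    (∀ x ∈ Ioc xg L, q x = pL + u * (L - x)) := by
  have hleft : ∀ x ∈ Ico (0 : ℝ) xg, q x = p0 - v * x := fun x hx => by
    rw [(convex_Ico 0 xg).eq_add_smul_of_hasDerivWithinAt hq1 ⟨le_rfl, hxg0⟩ hx, hq0,
      smul_eq_mul]
    ring
  have hright : ∀ x ∈ Ioc xg L, q x = pL + v * (L - x) := fun x hx => by
    rw [(convex_Ioc xg L).eq_add_smul_of_hasDerivWithinAt hq2 ⟨hxgL, le_rfl⟩ hx, hqL,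
      smul_eq_mul]
    ring
  have hqm' : qm = p0 - v * xg :=
    eq_of_tendsto_nhdsLT_of_eqOn_Ioo (g := fun x => p0 - v * x) hxg0
      (fun x hx => hleft x (Ioo_subset_Ico_self hx)) (by fun_prop) hqm
  have hqp' : qp = pL + v * (L - xg) :=
    eq_of_tendsto_nhdsGT_of_eqOn_Ioo (g := fun x => pL + v * (L - x)) hxgL
      (fun x hx => hright x (Ioo_subset_Ioc_self hx)) (by fun_prop) hqp
  have hvu : v = u := by
    rw [hqm', hqp'] at hcoup
    have hden : 0 < tf⁻¹ + L := by have := inv_pos.2 htf; linarith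
    rw [hu, eq_div_iff hden.ne']
    field_simp
    linarith
  refine ⟨hvu, fun x hx => ?_, fun x hx => ?_⟩
  · rw [hleft x hx, hvu]
  · rw [hright x hx, hvu]

/-- Uniqueness for the one-dimensional fault boundary value problem: any constant
velocity `v` and pressure `q` solving the problem (derivative `-v` on `[0, xg)` and
`(xg, L]`, boundary values `p0`, `pL`, one-sided limits `qm`, `qp` at the fault, and
coupling `v = t_f * (qm - qp)`) must satisfy `v = u := (p0 - pL)/(t_f⁻¹ + L)` and be
given by the explicit piecewise-linear formulas. -/
theorem stmt_1 (L xg tf p0 pL : ℝ) (hL : 0 < L) (hxg0 : 0 < xg) (hxgL : xg < L)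
    (htf : 0 < tf) (u : ℝ) (hu : u = (p0 - pL) / (tf⁻¹ + L))
    (v : ℝ) (q : ℝ → ℝ)
    (hq1 : ∀ x ∈ Ico (0 : ℝ) xg, HasDerivWithinAt q (-v) (Ico (0 : ℝ) xg) x)
    (hq2 : ∀ x ∈ Ioc xg L, HasDerivWithinAt q (-v) (Ioc xg L) x)
    (hq0 : q 0 = p0) (hqL : q L = pL)
    (qm qp : ℝ)
    (hqm : Tendsto q (𝓝[<] xg) (𝓝 qm))
    (hqp : Tendsto q (𝓝[>] xg) (𝓝 qp))
    (hcoup : v = tf * (qm - qp)) :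
    v = u ∧
    (∀ x ∈ Ico (0 : ℝ) xg, q x = p0 - u * x) ∧
    (∀ x ∈ Ioc xg L, q x = pL + u * (L - x)) :=
  stmt_1_general L xg tf p0 pL hxg0 hxgL htf u hu v q hq1 hq2 hq0 hqL qm qp hqm hqp hcoup
end

section
/- The decoupled equation with Dirichlet boundary conditions is equivalent to the approximate fault equation: if q : [0, L] → ℝ is twice continuously differentiable and satisfies −q″(x) + (δ′(x)/(t_f + δ(x)))·q′(x) = 0 for all x ∈ (0, L), q(0) = p0, q(L) = pL, and if δ ≥ 0, H(0) = 0 and H(L) = 1 (in particular ∫₀ᴸ δ = 1), then q(x) = p_ε(x) for all x ∈ [0, L]; consequently q also satisfies −q″(x) = δ′(x)·u/t_f on (0, L). -/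
/-!
Dividing the equation by `t_f + δ > 0` shows that `q' / (t_f + δ)` has zero derivative, so
`q' = c (t_f + δ)` for a constant `c`. Integrating, `q x = p0 + c (t_f x + H x)`, and the boundary
condition `q L = pL` together with `H L = 1` forces `c = -u / t_f`; on both sides of `xg` this is
the formula defining `p_ε`, and then `q'' = c δ'`.
-/

open Set

theorem IsOpen.exists_eq_const_mul_of_deriv_eq_logDeriv_mul {𝕜 : Type*} [RCLike 𝕜]
    {s : Set 𝕜} {g w : 𝕜 → 𝕜} (hs : IsOpen s) (hs' : IsPreconnected s)
    (hg : DifferentiableOn 𝕜 g s) (hw : DifferentiableOn 𝕜 w s) (hw0 : ∀ x ∈ s, w x ≠ 0)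
    (hgw : ∀ x ∈ s, deriv g x = logDeriv w x * g x) : ∃ c, ∀ x ∈ s, g x = c * w x := by
  have hquot : s.EqOn (deriv (g / w)) 0 := by
    intro x hx
    have hgx := (hg.differentiableAt (hs.mem_nhds hx)).hasDerivAt
    have hwx := (hw.differentiableAt (hs.mem_nhds hx)).hasDerivAt
    rw [(hgx.div hwx (hw0 x hx)).deriv, hgw x hx, logDeriv_apply, Pi.zero_apply]
    field_simp [hw0 x hx]
    ring
  obtain ⟨c, hc⟩ := hs.exists_is_const_of_deriv_eq_zero hs' (hg.div hw hw0) hquot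
  exact ⟨c, fun x hx => (div_eq_iff (hw0 x hx)).1 (hc x hx)⟩

theorem eqOn_Icc_of_hasDerivAt_eq {f g f' : ℝ → ℝ} {a b : ℝ}
    (hf : ContinuousOn f (Icc a b)) (hg : ContinuousOn g (Icc a b))
    (hf' : ∀ x ∈ Ioo a b, HasDerivAt f (f' x) x) (hg' : ∀ x ∈ Ioo a b, HasDerivAt g (f' x) x)
    (ha : f a = g a) : EqOn f g (Icc a b) := by
  intro x hx
  rcases hx.1.eq_or_lt with rfl | hax
  · exact ha
  obtain ⟨y, -, hy⟩ := exists_hasDerivAt_eq_slope (f - g) 0 hax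
    ((hf.sub hg).mono (Icc_subset_Icc_right hx.2))
    fun y hy => by
      simpa using (hf' y ⟨hy.1, hy.2.trans_le hx.2⟩).sub (hg' y ⟨hy.1, hy.2.trans_le hx.2⟩)
  rw [Pi.zero_apply, eq_comm, div_eq_zero_iff, Pi.sub_apply, Pi.sub_apply, ha] at hy
  rcases hy with hy | hy <;> linarith

theorem exists_eqOn_Icc_of_deriv_deriv_eq_logDeriv_mul {q w W : ℝ → ℝ} {a b : ℝ}
    (hq : ContDiffOn ℝ 2 q (Icc a b)) (hw : DifferentiableOn ℝ w (Ioo a b))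
    (hw0 : ∀ x ∈ Ioo a b, w x ≠ 0) (hW : ∀ x ∈ Icc a b, HasDerivAt W (w x) x)
    (hode : ∀ x ∈ Ioo a b, deriv (deriv q) x = logDeriv w x * deriv q x) :
    ∃ c, (∀ x ∈ Ioo a b, deriv q x = c * w x) ∧
      EqOn q (fun x => q a + c * (W x - W a)) (Icc a b) := by
  have hqIoo : ContDiffOn ℝ 2 q (Ioo a b) := hq.mono Ioo_subset_Icc_self
  obtain ⟨c, hc⟩ := isOpen_Ioo.exists_eq_const_mul_of_deriv_eq_logDeriv_mul isPreconnected_Ioo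
    ((hqIoo.deriv_of_isOpen isOpen_Ioo (m := 1) (by norm_num)).differentiableOn one_ne_zero)
    hw hw0 hode
  refine ⟨c, hc, eqOn_Icc_of_hasDerivAt_eq hq.continuousOn ?_ (f' := fun x => c * w x)
    (fun x hx => ?_) (fun x hx => ?_) (by simp)⟩
  · exact fun x hx => ((((hW x hx).sub_const (W a)).const_mul c).const_add
      (q a)).continuousAt.continuousWithinAt
  · rw [← hc x hx]
    exact ((hqIoo.differentiableOn two_ne_zero x hx).differentiableAt
      (isOpen_Ioo.mem_nhds hx)).hasDerivAt
  · exact (((hW x (Ioo_subset_Icc_self hx)).sub_const (W a)).const_mul c).const_add (q a)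

theorem stmt_7_general (L xg tf p0 pL : ℝ) (hL : 0 < L)
    (htf : 0 < tf) (u : ℝ) (hu : u = (p0 - pL) / (tf⁻¹ + L))
    (δ H pe : ℝ → ℝ) (hδ : ContDiff ℝ (⊤ : ℕ∞) δ) (hδ0 : ∀ x, 0 ≤ δ x)
    (hH : ∀ x, H x = ∫ t in (0 : ℝ)..x, δ t)
    (hpe1 : ∀ x, 0 ≤ x → x ≤ xg → pe x = p0 - u * x - H x * u / tf)
    (hpe2 : ∀ x, xg ≤ x → x ≤ L → pe x = pL + u * (L - x) - (H x - 1) * u / tf)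
    (hH0 : H 0 = 0) (hHL : H L = 1)
    (q : ℝ → ℝ) (hq : ContDiffOn ℝ 2 q (Icc 0 L))
    (hode : ∀ x ∈ Ioo (0 : ℝ) L,
      -(deriv (deriv q) x) + (deriv δ x / (tf + δ x)) * deriv q x = 0)
    (hq0 : q 0 = p0) (hqL : q L = pL) :
    (∀ x ∈ Icc (0 : ℝ) L, q x = pe x) ∧
    (∀ x ∈ Ioo (0 : ℝ) L, -(deriv (deriv q) x) = deriv δ x * u / tf) := by
  have hw0 : ∀ x, tf + δ x ≠ 0 := fun x => (add_pos_of_pos_of_nonneg htf (hδ0 x)).ne'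
  have hW : ∀ x, HasDerivAt (fun x => tf * x + H x) (tf + δ x) x := fun x => by
    rw [funext hH]
    have h := ((hasDerivAt_id x).const_mul tf).add
      (hδ.continuous.integral_hasStrictDerivAt 0 x).hasDerivAt
    rwa [mul_one] at h
  obtain ⟨c, hc, hqW⟩ := exists_eqOn_Icc_of_deriv_deriv_eq_logDeriv_mul hq
    ((hδ.differentiable (by simp)).const_add tf).differentiableOn (fun x _ => hw0 x)
    (fun x _ => hW x)
    fun x hx => by rw [logDeriv_apply, deriv_const_add]; linarith [hode x hx]
  simp only [hq0, hH0, mul_zero, add_zero, sub_zero] at hqW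
  have hL' : pL = p0 + c * (tf * L + 1) := by
    simpa [hqL, hHL] using hqW (right_mem_Icc.2 hL.le)
  have hcu : c = -u / tf := by
    have hu' : u * (1 + tf * L) = tf * (p0 - pL) := by
      rw [hu]; field_simp
    rw [eq_div_iff htf.ne']
    refine mul_right_cancel₀ (by positivity : 1 + tf * L ≠ 0) ?_
    linear_combination hu' - tf * hL'
  refine ⟨fun x hx => ?_, fun x hx => ?_⟩
  · rw [hqW hx, hcu]
    rcases le_total x xg with hxg | hxg
    · rw [hpe1 x hx.1 hxg]; field_simp; ring
    · rw [hpe2 x hxg hx.2, hL', hcu]; field_simp; ring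
  · have hq'' := hode x hx
    rw [hc x hx, mul_left_comm, div_mul_cancel₀ _ (hw0 x), hcu] at hq''
    linear_combination hq''

/-- The decoupled equation with Dirichlet boundary conditions is equivalent to the
approximate fault equation: any twice continuously differentiable `q : [0,L] → ℝ`
satisfying `-q''(x) + (δ'(x)/(t_f + δ(x)))·q'(x) = 0` on `(0, L)` with `q(0) = p0`,
`q(L) = pL` (given `δ ≥ 0`, `H(0) = 0`, `H(L) = 1`) equals `p_ε` on `[0, L]`, and
consequently satisfies `-q''(x) = δ'(x)·u/t_f` on `(0, L)`. -/
theorem stmt_7 (L xg tf p0 pL : ℝ) (hL : 0 < L) (hxg0 : 0 < xg) (hxgL : xg < L)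
    (htf : 0 < tf) (u : ℝ) (hu : u = (p0 - pL) / (tf⁻¹ + L))
    (δ H pe : ℝ → ℝ) (hδ : ContDiff ℝ (⊤ : ℕ∞) δ) (hδ0 : ∀ x, 0 ≤ δ x)
    (hH : ∀ x, H x = ∫ t in (0 : ℝ)..x, δ t)
    (hpe1 : ∀ x, 0 ≤ x → x ≤ xg → pe x = p0 - u * x - H x * u / tf)
    (hpe2 : ∀ x, xg ≤ x → x ≤ L → pe x = pL + u * (L - x) - (H x - 1) * u / tf)
    (hH0 : H 0 = 0) (hHL : H L = 1)
    (q : ℝ → ℝ) (hq : ContDiffOn ℝ 2 q (Icc 0 L))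
    (hode : ∀ x ∈ Ioo (0 : ℝ) L,
      -(deriv (deriv q) x) + (deriv δ x / (tf + δ x)) * deriv q x = 0)
    (hq0 : q 0 = p0) (hqL : q L = pL) :
    (∀ x ∈ Icc (0 : ℝ) L, q x = pe x) ∧
    (∀ x ∈ Ioo (0 : ℝ) L, -(deriv (deriv q) x) = deriv δ x * u / tf) :=
  stmt_7_general L xg tf p0 pL hL htf u hu δ H pe hδ hδ0 hH hpe1 hpe2 hH0 hHL q hq hode hq0 hqL
end

section
/- The approximate pressure p_ε satisfies the weak (variational) formulation of the decoupled equation: for every C^∞ function w : ℝ → ℝ with compact support contained in the open interval (0, L), one has ∫₀ᴸ p_ε′(x)·w′(x) dx + ∫₀ᴸ (δ′(x)/(t_f + δ(x)))·p_ε′(x)·w(x) dx = 0, provided δ ≥ 0. -/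
open Set Filter Topology intervalIntegral

/-!
On `(0, L)` both branches of `p_ε` are the single formula `p0 - u x - H(x) u / t_f`, because the
choice of `u` makes them agree. Hence `p_ε' = -(u / t_f) (t_f + δ)`, and the integrand of the weak
form becomes `-(u / t_f) ((t_f + δ) w)'`, whose integral vanishes since `w (0) = w (L) = 0`.
-/

theorem integral_weak_form_eq_zero_of_deriv_eq_const_mul {a b c : ℝ} (hab : a ≤ b)
    {k k' p w : ℝ → ℝ} (hk : ∀ x, HasDerivAt k (k' x) x) (hk' : Continuous k')
    (hk0 : ∀ x ∈ Ioo a b, k x ≠ 0) (hp : ∀ x ∈ Ioo a b, deriv p x = c * k x)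
    (hw : ContDiff ℝ 1 w) (hwa : w a = 0) (hwb : w b = 0) :
    (∫ x in a..b, deriv p x * deriv w x) + ∫ x in a..b, k' x / k x * deriv p x * w x = 0 := by
  have hkc : Continuous k := continuous_iff_continuousAt.2 fun x => (hk x).continuousAt
  have hw' : Continuous (deriv w) := hw.continuous_deriv le_rfl
  have hwd : ∀ x, HasDerivAt w (deriv w x) x :=
    fun x => (hw.differentiable one_ne_zero x).hasDerivAt
  have hkw : ∀ x, HasDerivAt (fun x => c * (k x * w x))
      (c * k x * deriv w x + c * (k' x * w x)) x :=
    fun x => (((hk x).mul (hwd x)).const_mul c).congr_deriv (by ring)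
  have hleft : (∫ x in a..b, deriv p x * deriv w x) = ∫ x in a..b, c * k x * deriv w x :=
    integral_congr_Ioo_of_le hab fun x hx => by simp only [hp x hx]
  have hright : (∫ x in a..b, k' x / k x * deriv p x * w x) = ∫ x in a..b, c * (k' x * w x) :=
    integral_congr_Ioo_of_le hab fun x hx => by
      simp only [hp x hx]
      field_simp [hk0 x hx]
  have hcont₁ : Continuous fun x => c * k x * deriv w x := (continuous_const.mul hkc).mul hw'
  have hcont₂ : Continuous fun x => c * (k' x * w x) :=
    continuous_const.mul (hk'.mul hw.continuous)
  rw [hleft, hright, ← integral_add (hcont₁.intervalIntegrable _ _) (hcont₂.intervalIntegrable _ _),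
    integral_eq_sub_of_hasDerivAt (fun x _ => hkw x) ((hcont₁.add hcont₂).intervalIntegrable _ _)]
  simp [hwa, hwb]

theorem pressure_eqOn_Icc {L xg tf p0 pL u : ℝ} {H pe : ℝ → ℝ}
    (hu : u * (tf⁻¹ + L) = p0 - pL)
    (hpe1 : ∀ x, 0 ≤ x → x ≤ xg → pe x = p0 - u * x - H x * u / tf)
    (hpe2 : ∀ x, xg ≤ x → x ≤ L → pe x = pL + u * (L - x) - (H x - 1) * u / tf) :
    EqOn pe (fun x => p0 - u * x - H x * u / tf) (Icc 0 L) := by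
  intro x ⟨hx0, hxL⟩
  rcases le_total x xg with hx | hx
  · exact hpe1 x hx0 hx
  · rw [hpe2 x hx hxL]
    linear_combination hu

theorem deriv_pressure_eq_of_eqOn {s : Set ℝ} (hs : IsOpen s) {tf p0 u : ℝ} (htf : tf ≠ 0)
    {δ H pe : ℝ → ℝ} (hδ : Continuous δ) (hH : ∀ x, H x = ∫ t in (0 : ℝ)..x, δ t)
    (hpe : EqOn pe (fun x => p0 - u * x - H x * u / tf) s) :
    ∀ x ∈ s, deriv pe x = -(u / tf) * (tf + δ x) := by
  intro x hx
  have hH' : HasDerivAt H (δ x) x := by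
    rw [funext hH]
    exact (hδ.integral_hasStrictDerivAt 0 x).hasDerivAt
  have hformula : HasDerivAt (fun x => p0 - u * x - H x * u / tf) (-(u / tf) * (tf + δ x)) x := by
    refine (((hasDerivAt_id' x).const_mul u).const_sub p0 |>.sub
      ((hH'.mul_const u).div_const tf)).congr_deriv ?_
    field_simp
    ring
  exact (hformula.congr_of_eventuallyEq (eventuallyEq_of_mem (hs.mem_nhds hx) hpe)).deriv

theorem stmt_8_general (L xg tf p0 pL : ℝ) (hL : 0 < L)
    (htf : 0 < tf) (u : ℝ) (hu : u = (p0 - pL) / (tf⁻¹ + L))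
    (δ H pe : ℝ → ℝ) (hδ : ContDiff ℝ (⊤ : ℕ∞) δ) (hδ0 : ∀ x, 0 ≤ δ x)
    (hH : ∀ x, H x = ∫ t in (0 : ℝ)..x, δ t)
    (hpe1 : ∀ x, 0 ≤ x → x ≤ xg → pe x = p0 - u * x - H x * u / tf)
    (hpe2 : ∀ x, xg ≤ x → x ≤ L → pe x = pL + u * (L - x) - (H x - 1) * u / tf) :
    ∀ w : ℝ → ℝ, ContDiff ℝ (⊤ : ℕ∞) w → HasCompactSupport w →
      tsupport w ⊆ Ioo (0 : ℝ) L →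
      (∫ x in (0 : ℝ)..L, deriv pe x * deriv w x) +
        (∫ x in (0 : ℝ)..L, (deriv δ x / (tf + δ x)) * deriv pe x * w x) = 0 := by
  intro w hw _ hws
  have hu' : u * (tf⁻¹ + L) = p0 - pL := by
    rw [hu]
    field_simp
  have hpe : EqOn pe (fun x => p0 - u * x - H x * u / tf) (Ioo 0 L) :=
    (pressure_eqOn_Icc hu' hpe1 hpe2).mono Ioo_subset_Icc_self
  have hw_boundary : ∀ x ∉ Ioo 0 L, w x = 0 :=
    fun x hx => image_eq_zero_of_notMem_tsupport fun h => hx (hws h)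
  exact integral_weak_form_eq_zero_of_deriv_eq_const_mul hL.le (k := fun x => tf + δ x)
    (fun x => ((hδ.differentiable (by simp) x).hasDerivAt).const_add tf)
    (hδ.continuous_deriv (by simp)) (fun x _ => (add_pos_of_pos_of_nonneg htf (hδ0 x)).ne')
    (deriv_pressure_eq_of_eqOn isOpen_Ioo htf.ne' hδ.continuous hH hpe)
    (hw.of_le (by simp)) (hw_boundary 0 (by simp)) (hw_boundary L (by simp))

/-- The approximate pressure `p_ε` satisfies the weak (variational) formulation of the
decoupled equation: for every smooth test function `w` with compact support contained
in `(0, L)`, `∫₀ᴸ p_ε'·w' + ∫₀ᴸ (δ'/(t_f + δ))·p_ε'·w = 0`, provided `δ ≥ 0`. -/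
theorem stmt_8 (L xg tf p0 pL : ℝ) (hL : 0 < L) (hxg0 : 0 < xg) (hxgL : xg < L)
    (htf : 0 < tf) (u : ℝ) (hu : u = (p0 - pL) / (tf⁻¹ + L))
    (δ H pe : ℝ → ℝ) (hδ : ContDiff ℝ (⊤ : ℕ∞) δ) (hδ0 : ∀ x, 0 ≤ δ x)
    (hH : ∀ x, H x = ∫ t in (0 : ℝ)..x, δ t)
    (hpe1 : ∀ x, 0 ≤ x → x ≤ xg → pe x = p0 - u * x - H x * u / tf)
    (hpe2 : ∀ x, xg ≤ x → x ≤ L → pe x = pL + u * (L - x) - (H x - 1) * u / tf) :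
    ∀ w : ℝ → ℝ, ContDiff ℝ (⊤ : ℕ∞) w → HasCompactSupport w →
      tsupport w ⊆ Ioo (0 : ℝ) L →
      (∫ x in (0 : ℝ)..L, deriv pe x * deriv w x) +
        (∫ x in (0 : ℝ)..L, (deriv δ x / (tf + δ x)) * deriv pe x * w x) = 0 :=
  stmt_8_general L xg tf p0 pL hL htf u hu δ H pe hδ hδ0 hH hpe1 hpe2
end

section
/- One-dimensional distributional Laplacian identity for a pressure with a jump: let p : [0, L] → ℝ be continuous on [0, xg) and on (xg, L], twice continuously differentiable on (0, xg) and on (xg, L), with one-sided limits p⁻ := lim_{x→xg⁻} p(x), p⁺ := lim_{x→xg⁺} p(x), and with one-sided derivative limits at xg that exist and are equal (continuity of the flux p′ across xg). Suppose −p″(x) = f(x) on (0, xg) ∪ (xg, L) for a function f that is continuous on [0, xg) and (xg, L] and integrable on [0, L]. Then for every C^∞ function φ : ℝ → ℝ with compact support contained in (0, L): −∫₀ᴸ p(x)·φ″(x) dx = ∫₀ᴸ f(x)·φ(x) dx − (p⁻ − p⁺)·φ′(xg). -/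
open Set Filter Topology MeasureTheory intervalIntegral

/-!
On each side of `xg` the functions `p` and `φ` are `C²`, so the Wronskian
`W = p φ' - p' φ` has derivative `p φ'' - p'' φ`, and Green's identity
`∫ₐᵇ (p φ'' - p'' φ) = W(b⁻) - W(a⁺)` holds with one-sided limits at the endpoints.
Near `0` and `L` the test function vanishes, so `W` does too; at `xg` the one-sided limits
of `W` are `p⁻ φ'(xg) - d φ(xg)` and `p⁺ φ'(xg) - d φ(xg)`. Adding the two identities, the
`d φ(xg)` terms cancel because the flux is continuous, leaving only the jump `p⁻ - p⁺`.
-/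

theorem ContinuousOn.intervalIntegrable_of_tendsto {E : Type*} [NormedAddCommGroup E]
    {g : ℝ → E} {a b : ℝ} {ga gb : E} (hab : a ≤ b) (hg : ContinuousOn g (Ioo a b))
    (ha : Tendsto g (𝓝[>] a) (𝓝 ga)) (hb : Tendsto g (𝓝[<] b) (𝓝 gb)) :
    IntervalIntegrable g volume a b := by
  have hext : IntervalIntegrable (extendFrom (Ioo a b) g) volume a b :=
    (continuousOn_Icc_extendFrom_Ioo hg ha hb).intervalIntegrable_of_Icc hab
  rw [intervalIntegrable_iff_integrableOn_Ioo_of_le hab] at hext ⊢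
  exact hext.congr_fun (extendFrom_extends hg) measurableSet_Ioo

noncomputable def wronskian (p φ : ℝ → ℝ) (x : ℝ) : ℝ :=
  p x * deriv φ x - deriv p x * φ x

theorem hasDerivAt_wronskian {p φ : ℝ → ℝ} {x : ℝ} {s : Set ℝ} (hs : IsOpen s) (hx : x ∈ s)
    (hp : ContDiffOn ℝ 2 p s) (hφ : ContDiffOn ℝ 2 φ s) :
    HasDerivAt (wronskian p φ)
      (p x * deriv (deriv φ) x - deriv (deriv p) x * φ x) x := by
  have hderiv : ∀ {g : ℝ → ℝ}, ContDiffOn ℝ 2 g s →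
      HasDerivAt g (deriv g x) x ∧ HasDerivAt (deriv g) (deriv (deriv g) x) x := fun hg =>
    ⟨((hg.differentiableOn (by norm_num)).differentiableAt (hs.mem_nhds hx)).hasDerivAt,
      (((hg.deriv_of_isOpen hs (by norm_num) : ContDiffOn ℝ 1 _ s).differentiableOn
        one_ne_zero).differentiableAt (hs.mem_nhds hx)).hasDerivAt⟩
  obtain ⟨hp₁, hp₂⟩ := hderiv hp
  obtain ⟨hφ₁, hφ₂⟩ := hderiv hφ
  exact ((hp₁.mul hφ₂).sub (hp₂.mul hφ₁)).congr_deriv (by ring)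

theorem Filter.Tendsto.wronskian {l : Filter ℝ} {p φ : ℝ → ℝ} {p₀ p₁ φ₀ φ₁ : ℝ}
    (hp : Tendsto p l (𝓝 p₀)) (hp' : Tendsto (deriv p) l (𝓝 p₁))
    (hφ : Tendsto φ l (𝓝 φ₀)) (hφ' : Tendsto (deriv φ) l (𝓝 φ₁)) :
    Tendsto (wronskian p φ) l (𝓝 (p₀ * φ₁ - p₁ * φ₀)) :=
  (hp.mul hφ').sub (hp'.mul hφ)

theorem tendsto_mul_nhds_zero_of_notMem_tsupport {g φ : ℝ → ℝ} {y : ℝ}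
    (hy : y ∉ tsupport φ) : Tendsto (fun x => g x * φ x) (𝓝 y) (𝓝 0) := by
  refine tendsto_const_nhds.congr' ?_
  filter_upwards [notMem_tsupport_iff_eventuallyEq.mp hy] with x hx
  simp [hx]

theorem tendsto_wronskian_nhds_zero_of_notMem_tsupport {p φ : ℝ → ℝ} {y : ℝ}
    (hy : y ∉ tsupport φ) : Tendsto (wronskian p φ) (𝓝 y) (𝓝 0) := by
  have hy' : y ∉ tsupport (deriv φ) := fun h => hy (tsupport_deriv_subset h)
  have h := (tendsto_mul_nhds_zero_of_notMem_tsupport (g := p) hy').sub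
    (tendsto_mul_nhds_zero_of_notMem_tsupport (g := deriv p) hy)
  rw [sub_zero] at h
  exact h

theorem integral_mul_deriv_deriv_sub_deriv_deriv_mul {a b : ℝ} (hab : a < b) {p φ : ℝ → ℝ}
    (hp : ContDiffOn ℝ 2 p (Ioo a b)) (hφ : ContDiffOn ℝ 2 φ (Ioo a b)) {wa wb : ℝ}
    (ha : Tendsto (wronskian p φ) (𝓝[>] a) (𝓝 wa))
    (hb : Tendsto (wronskian p φ) (𝓝[<] b) (𝓝 wb))
    (hpφ : IntervalIntegrable (fun x => p x * deriv (deriv φ) x) volume a b)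
    (hp'φ : IntervalIntegrable (fun x => deriv (deriv p) x * φ x) volume a b) :
    (∫ x in a..b, p x * deriv (deriv φ) x) - ∫ x in a..b, deriv (deriv p) x * φ x
      = wb - wa := by
  rw [← integral_sub hpφ hp'φ]
  exact integral_eq_sub_of_hasDerivAt_of_tendsto hab
    (fun x hx => hasDerivAt_wronskian isOpen_Ioo hx hp hφ) (hpφ.sub hp'φ) ha hb

theorem neg_integral_mul_deriv_deriv_of_neg_deriv_deriv_eq {a b : ℝ} (hab : a < b)
    {p f φ : ℝ → ℝ} (hp : ContDiffOn ℝ 2 p (Ioo a b)) (hφ : ContDiffOn ℝ 2 φ (Ioo a b))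
    (hode : ∀ x ∈ Ioo a b, -deriv (deriv p) x = f x)
    (hfφ : IntervalIntegrable (fun x => f x * φ x) volume a b)
    (hpφ : IntervalIntegrable (fun x => p x * deriv (deriv φ) x) volume a b) {wa wb : ℝ}
    (ha : Tendsto (wronskian p φ) (𝓝[>] a) (𝓝 wa))
    (hb : Tendsto (wronskian p φ) (𝓝[<] b) (𝓝 wb)) :
    -(∫ x in a..b, p x * deriv (deriv φ) x) = (∫ x in a..b, f x * φ x) - (wb - wa) := by
  have hode' : EqOn (fun x => deriv (deriv p) x * φ x) (fun x => -(f x * φ x)) (Ioo a b) :=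
    fun x hx => by simp only [← hode x hx, neg_mul, neg_neg]
  have hp'φ : IntervalIntegrable (fun x => deriv (deriv p) x * φ x) volume a b := by
    rw [intervalIntegrable_iff_integrableOn_Ioo_of_le hab.le] at hfφ ⊢
    exact hfφ.neg.congr_fun hode'.symm measurableSet_Ioo
  have hint : ∫ x in a..b, deriv (deriv p) x * φ x = -∫ x in a..b, f x * φ x := by
    rw [integral_of_le hab.le, integral_of_le hab.le, integral_Ioc_eq_integral_Ioo,
      integral_Ioc_eq_integral_Ioo, ← MeasureTheory.integral_neg]
    exact setIntegral_congr_fun measurableSet_Ioo hode'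
  linarith [integral_mul_deriv_deriv_sub_deriv_deriv_mul hab hp hφ ha hb hpφ hp'φ]

theorem stmt_9_general (L xg : ℝ) (hxg0 : 0 < xg) (hxgL : xg < L)
    (p f : ℝ → ℝ) (pm pp d : ℝ)
    (hs1 : ContDiffOn ℝ 2 p (Ioo 0 xg)) (hs2 : ContDiffOn ℝ 2 p (Ioo xg L))
    (hpm : Tendsto p (𝓝[<] xg) (𝓝 pm)) (hpp : Tendsto p (𝓝[>] xg) (𝓝 pp))
    (hdm : Tendsto (deriv p) (𝓝[<] xg) (𝓝 d))
    (hdp : Tendsto (deriv p) (𝓝[>] xg) (𝓝 d))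
    (hfi : IntegrableOn f (Icc 0 L))
    (hode : ∀ x ∈ Ioo (0 : ℝ) xg ∪ Ioo xg L, -(deriv (deriv p) x) = f x) :
    ∀ φ : ℝ → ℝ, ContDiff ℝ (⊤ : ℕ∞) φ → HasCompactSupport φ →
      tsupport φ ⊆ Ioo (0 : ℝ) L →
      -(∫ x in (0 : ℝ)..L, p x * deriv (deriv φ) x) =
        (∫ x in (0 : ℝ)..L, f x * φ x) - (pm - pp) * deriv φ xg := by
  intro φ hφ _ hsupp
  have hφ2 : ContDiff ℝ 2 φ := contDiff_infty.mp hφ 2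
  have hφ' : Continuous (deriv φ) := hφ2.continuous_deriv (by norm_num)
  have hφ'' : Continuous (deriv (deriv φ)) := (hφ2.iterate_deriv' 0 2).continuous
  have hvanish : ∀ y ∉ Ioo (0 : ℝ) L, Tendsto (wronskian p φ) (𝓝 y) (𝓝 0) ∧
      Tendsto (fun x => p x * deriv (deriv φ) x) (𝓝 y) (𝓝 0) := fun y hy =>
    ⟨tendsto_wronskian_nhds_zero_of_notMem_tsupport (hy <| hsupp ·),
      tendsto_mul_nhds_zero_of_notMem_tsupport
        (hy <| hsupp <| tsupport_deriv_subset <| tsupport_deriv_subset ·)⟩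
  obtain ⟨hW0, hpφ0⟩ := hvanish 0 (fun h => h.1.false)
  obtain ⟨hWL, hpφL⟩ := hvanish L (fun h => h.2.false)
  have hfφ : IntervalIntegrable (fun x => f x * φ x) volume 0 L :=
    (intervalIntegrable_iff_integrableOn_Icc_of_le (hxg0.trans hxgL).le).mpr
      (hfi.mul_continuousOn hφ2.continuous.continuousOn isCompact_Icc)
  have hxg : xg ∈ uIcc 0 L := mem_uIcc_of_le hxg0.le hxgL.le
  have hpφ₁ : IntervalIntegrable (fun x => p x * deriv (deriv φ) x) volume 0 xg :=
    (hs1.continuousOn.mul hφ''.continuousOn).intervalIntegrable_of_tendsto hxg0.le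
      (hpφ0.mono_left nhdsWithin_le_nhds) (hpm.mul hφ''.continuousWithinAt)
  have hpφ₂ : IntervalIntegrable (fun x => p x * deriv (deriv φ) x) volume xg L :=
    (hs2.continuousOn.mul hφ''.continuousOn).intervalIntegrable_of_tendsto hxgL.le
      (hpp.mul hφ''.continuousWithinAt) (hpφL.mono_left nhdsWithin_le_nhds)
  have hleft := neg_integral_mul_deriv_deriv_of_neg_deriv_deriv_eq hxg0 hs1 hφ2.contDiffOn
    (fun x hx => hode x (Or.inl hx)) (hfφ.mono_set (uIcc_subset_uIcc_left hxg)) hpφ₁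
    (hW0.mono_left nhdsWithin_le_nhds) (hpm.wronskian hdm hφ2.continuous.continuousWithinAt hφ'.continuousWithinAt)
  have hright := neg_integral_mul_deriv_deriv_of_neg_deriv_deriv_eq hxgL hs2 hφ2.contDiffOn
    (fun x hx => hode x (Or.inr hx)) (hfφ.mono_set (uIcc_subset_uIcc_right hxg)) hpφ₂
    (hpp.wronskian hdp hφ2.continuous.continuousWithinAt hφ'.continuousWithinAt)
    (hWL.mono_left nhdsWithin_le_nhds)
  rw [← integral_add_adjacent_intervals hpφ₁ hpφ₂, ← integral_add_adjacent_intervals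
    (hfφ.mono_set (uIcc_subset_uIcc_left hxg)) (hfφ.mono_set (uIcc_subset_uIcc_right hxg))]
  linear_combination hleft + hright

/-- One-dimensional distributional Laplacian identity for a pressure with a jump:
if `p` is continuous on `[0, xg)` and `(xg, L]`, twice continuously differentiable on
`(0, xg)` and `(xg, L)`, has one-sided limits `pm`, `pp` at `xg`, equal one-sided
limits `d` of its derivative at `xg` (flux continuity), and `-p'' = f` on
`(0, xg) ∪ (xg, L)` with `f` continuous on `[0, xg)` and `(xg, L]` and integrable on
`[0, L]`, then for every smooth `φ` compactly supported in `(0, L)`: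
`-∫₀ᴸ p·φ'' = ∫₀ᴸ f·φ - (pm - pp)·φ'(xg)`. -/
theorem stmt_9 (L xg : ℝ) (hL : 0 < L) (hxg0 : 0 < xg) (hxgL : xg < L)
    (p f : ℝ → ℝ) (pm pp d : ℝ)
    (hc1 : ContinuousOn p (Ico 0 xg)) (hc2 : ContinuousOn p (Ioc xg L))
    (hs1 : ContDiffOn ℝ 2 p (Ioo 0 xg)) (hs2 : ContDiffOn ℝ 2 p (Ioo xg L))
    (hpm : Tendsto p (𝓝[<] xg) (𝓝 pm)) (hpp : Tendsto p (𝓝[>] xg) (𝓝 pp))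
    (hdm : Tendsto (deriv p) (𝓝[<] xg) (𝓝 d))
    (hdp : Tendsto (deriv p) (𝓝[>] xg) (𝓝 d))
    (hfc1 : ContinuousOn f (Ico 0 xg)) (hfc2 : ContinuousOn f (Ioc xg L))
    (hfi : IntegrableOn f (Icc 0 L))
    (hode : ∀ x ∈ Ioo (0 : ℝ) xg ∪ Ioo xg L, -(deriv (deriv p) x) = f x) :
    ∀ φ : ℝ → ℝ, ContDiff ℝ (⊤ : ℕ∞) φ → HasCompactSupport φ →
      tsupport φ ⊆ Ioo (0 : ℝ) L →
      -(∫ x in (0 : ℝ)..L, p x * deriv (deriv φ) x) =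
        (∫ x in (0 : ℝ)..L, f x * φ x) - (pm - pp) * deriv φ xg :=
  stmt_9_general L xg hxg0 hxgL p f pm pp d hs1 hs2 hpm hpp hdm hdp hfi hode
end
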